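/- Let G be the presented group on generators α, α′, β, β′, γ, γ′ with the relations R₄ together with the additional relation γ′ = (α′β′)α′(α′β′)⁻¹. Then the homomorphism G → B̄₃ sending α, α′ to σ₁ and β, β′, γ, γ′ to σ₂ is well defined and is an isomorphism. -/
import Mathlib

set_option maxHeartbeats 2000000


/-- The relations of the reduced braid group `B̄₃`:
`σ₁σ₂σ₁ = σ₂σ₁σ₂` and `(σ₁σ₂)³ = 1`. -/
def bbar3Rels : Set (FreeGroup (Fin 2)) :=
  { FreeGroup.of 0 * FreeGroup.of 1 * FreeGroup.of 0 *
      (FreeGroup.of 1 * FreeGroup.of 0 * FreeGroup.of 1)⁻¹,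
    (FreeGroup.of 0 * FreeGroup.of 1) ^ 3 }

/-- The reduced braid group `B̄₃ = ⟨σ₁, σ₂ ∣ σ₁σ₂σ₁ = σ₂σ₁σ₂, (σ₁σ₂)³ = 1⟩`. -/
abbrev Bbar3 : Type := PresentedGroup bbar3Rels

/-- The generator `σ₁` of `B̄₃`. -/
def σ1 : Bbar3 := PresentedGroup.of 0

/-- The generator `σ₂` of `B̄₃`. -/
def σ2 : Bbar3 := PresentedGroup.of 1

namespace Stmt

def a : FreeGroup (Fin 6) := FreeGroup.of 0
def a' : FreeGroup (Fin 6) := FreeGroup.of 1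
def b : FreeGroup (Fin 6) := FreeGroup.of 2
def b' : FreeGroup (Fin 6) := FreeGroup.of 3
def c : FreeGroup (Fin 6) := FreeGroup.of 4
def c' : FreeGroup (Fin 6) := FreeGroup.of 5

/-- The set of relators. -/
def rels : Set (FreeGroup (Fin 6)) :=
  { (a * b) ^ 3 * (b' * a' * b' * a * b * a)⁻¹,
    (a' * b') ^ 3 * (b * a * b * a' * b' * a')⁻¹,
    a * b * (a' * b')⁻¹,
    ((b * a * b)⁻¹ * a * (b * a * b)) * (c') * ((b * a * b)⁻¹ * a * (b * a * b))⁻¹ * (c')⁻¹,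
    ((b' * a' * b')⁻¹ * a' * (b' * a' * b')) * (c) * ((b' * a' * b')⁻¹ * a' * (b' * a' * b'))⁻¹ * (c)⁻¹,
    c * c' * c * (c' * c * c')⁻¹,
    b * (c' * c * c'⁻¹)⁻¹,
    b' * (c * c' * c⁻¹)⁻¹,
    (b' * c)⁻¹ * a' * b' * c * ((b * c')⁻¹ * a * b * c')⁻¹,
    a * b * c' * a' * b' * c,
    c' * ((a' * b') * a' * (a' * b')⁻¹)⁻¹ }

end Stmt


lemma rel_one {α : Type*} (rels : Set (FreeGroup α)) {r : FreeGroup α} (hr : r ∈ rels) :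
    PresentedGroup.mk rels r = 1 :=
  (QuotientGroup.eq_one_iff r).mpr (Subgroup.subset_normalClosure hr)

lemma key {G : Type*} [Group G] (A A' B B' C C' : G)
    (r1 : (A*B)^3 * (B'*A'*B'*A*B*A)⁻¹ = 1)
    (r2 : (A'*B')^3 * (B*A*B*A'*B'*A')⁻¹ = 1)
    (r3 : A*B*(A'*B')⁻¹ = 1)
    (r6 : C*C'*C*(C'*C*C')⁻¹ = 1)
    (r7 : B*(C'*C*C'⁻¹)⁻¹ = 1)
    (r8 : B'*(C*C'*C⁻¹)⁻¹ = 1)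
    (r10 : A*B*C'*A'*B'*C = 1)
    (r11 : C'*(A'*B'*A'*(A'*B')⁻¹)⁻¹ = 1) :
    A = A' ∧ B = B' ∧ B = C ∧ B = C' ∧ A*B*A = B*A*B ∧ (A*B)^3 = 1 := by
  have hpow : ∀ x : G, x^3 = x*x*x := fun x => by simp [pow_succ]
  have h1 : (A*B)*(A*B)*(A*B) = B'*A'*B'*A*B*A := by
    have := mul_inv_eq_one.mp r1; rwa [hpow] at this
  have h2 : (A'*B')*(A'*B')*(A'*B') = B*A*B*A'*B'*A' := by
    have := mul_inv_eq_one.mp r2; rwa [hpow] at this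
  have h3 : A*B = A'*B' := mul_inv_eq_one.mp r3
  have h6 : C*C'*C = C'*C*C' := mul_inv_eq_one.mp r6
  have h7 : B = C'*C*C'⁻¹ := mul_inv_eq_one.mp r7
  have h8 : B' = C*C'*C⁻¹ := mul_inv_eq_one.mp r8
  have h11 : C' = A'*B'*A'*(A'*B')⁻¹ := mul_inv_eq_one.mp r11
  have hB' : B' = (A*B)*(A*B)*(A*B)*A⁻¹*(A*B)⁻¹*(A*B)⁻¹ := by
    calc B' = (B'*A'*B'*A*B*A) * A⁻¹ * (A*B)⁻¹ * (A'*B')⁻¹ := by group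
      _ = (A*B)*(A*B)*(A*B)*A⁻¹*(A*B)⁻¹*(A*B)⁻¹ := by rw [← h1, ← h3]
  have hB : B = (A*B)*(A*B)*(A*B)*A'⁻¹*(A*B)⁻¹*(A*B)⁻¹ := by
    calc B = (B*A*B*A'*B'*A') * A'⁻¹ * (A'*B')⁻¹ * (A*B)⁻¹ := by group
      _ = (A'*B')*(A'*B')*(A'*B') * A'⁻¹ * (A'*B')⁻¹ * (A*B)⁻¹ := by rw [← h2]
      _ = (A*B)*(A*B)*(A*B)*A'⁻¹*(A*B)⁻¹*(A*B)⁻¹ := by rw [← h3]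
  have hC'1 : C' = (A*B)*A'*(A*B)⁻¹ := by
    calc C' = A'*B'*A'*(A'*B')⁻¹ := h11
      _ = (A*B)*A'*(A*B)⁻¹ := by rw [← h3]
  have hC : C = A'⁻¹*(A*B)⁻¹*(A*B)⁻¹ := by
    calc C = (A*B*C'*A'*B')⁻¹ * (A*B*C'*A'*B'*C) := by group
      _ = (A*B*C'*A'*B')⁻¹ := by rw [r10, mul_one]
      _ = (A*B*C'*(A'*B'))⁻¹ := by group
      _ = (A*B*C'*(A*B))⁻¹ := by rw [← h3]
      _ = (A*B*((A*B)*A'*(A*B)⁻¹)*(A*B))⁻¹ := by rw [hC'1]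
      _ = A'⁻¹*(A*B)⁻¹*(A*B)⁻¹ := by group
  have e5 : (A*B)*(A*B)*(A*B)*A'⁻¹*(A*B)⁻¹*(A*B)⁻¹ = C⁻¹*C'*C := by
    calc (A*B)*(A*B)*(A*B)*A'⁻¹*(A*B)⁻¹*(A*B)⁻¹ = B := hB.symm
      _ = C'*C*C'⁻¹ := h7
      _ = C⁻¹*(C*C'*C)*C'⁻¹ := by group
      _ = C⁻¹*(C'*C*C')*C'⁻¹ := by rw [h6]
      _ = C⁻¹*C'*C := by group
  have hC'2 : C' = A'⁻¹*(A*B) := by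
    calc C' = C * (C⁻¹*C'*C) * C⁻¹ := by group
      _ = C * ((A*B)*(A*B)*(A*B)*A'⁻¹*(A*B)⁻¹*(A*B)⁻¹) * C⁻¹ := by rw [← e5]
      _ = (A'⁻¹*(A*B)⁻¹*(A*B)⁻¹) * ((A*B)*(A*B)*(A*B)*A'⁻¹*(A*B)⁻¹*(A*B)⁻¹)
            * (A'⁻¹*(A*B)⁻¹*(A*B)⁻¹)⁻¹ := by rw [hC]
      _ = A'⁻¹*(A*B) := by group
  have e6 : (A*B)*A'*(A*B)⁻¹ = A'⁻¹*(A*B) := hC'1.symm.trans hC'2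
  have star : A'*(A*B)*A' = (A*B)*(A*B) := by
    calc A'*(A*B)*A' = A'*((A*B)*A'*(A*B)⁻¹)*(A*B) := by group
      _ = A'*(A'⁻¹*(A*B))*(A*B) := by rw [e6]
      _ = (A*B)*(A*B) := by group
  have tB : (A*B)*B⁻¹ = (A*B)*((A*B)*(A*B)*(A*B)*A'⁻¹*(A*B)⁻¹*(A*B)⁻¹)⁻¹ :=
    congrArg (fun x => (A*B)*x⁻¹) hB
  have hA1 : A = (A*B)*(A*B)*(A*B)*A'*(A*B)⁻¹*(A*B)⁻¹*(A*B)⁻¹ := by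
    calc A = (A*B)*B⁻¹ := by group
      _ = (A*B)*((A*B)*(A*B)*(A*B)*A'⁻¹*(A*B)⁻¹*(A*B)⁻¹)⁻¹ := tB
      _ = (A*B)*(A*B)*(A*B)*A'*(A*B)⁻¹*(A*B)⁻¹*(A*B)⁻¹ := by group
  have tB' : (A*B)*B'⁻¹ = (A*B)*((A*B)*(A*B)*(A*B)*A⁻¹*(A*B)⁻¹*(A*B)⁻¹)⁻¹ :=
    congrArg (fun x => (A*B)*x⁻¹) hB'
  have hA'eq : A' = (A*B)*(A*B)*(A*B)*A*(A*B)⁻¹*(A*B)⁻¹*(A*B)⁻¹ := by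
    calc A' = (A*B)*B'⁻¹ := by rw [h3]; group
      _ = (A*B)*((A*B)*(A*B)*(A*B)*A⁻¹*(A*B)⁻¹*(A*B)⁻¹)⁻¹ := tB'
      _ = (A*B)*(A*B)*(A*B)*A*(A*B)⁻¹*(A*B)⁻¹*(A*B)⁻¹ := by group
  have hA2 : A = (A*B)⁻¹*(A*B)⁻¹*(A*B)⁻¹*A'*((A*B)*(A*B)*(A*B)) := by
    calc A = (A*B)⁻¹*(A*B)⁻¹*(A*B)⁻¹*((A*B)*(A*B)*(A*B)*A*(A*B)⁻¹*(A*B)⁻¹*(A*B)⁻¹)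
            *((A*B)*(A*B)*(A*B)) := by group
      _ = (A*B)⁻¹*(A*B)⁻¹*(A*B)⁻¹*A'*((A*B)*(A*B)*(A*B)) := by rw [← hA'eq]
  have e9 : (A*B)*(A*B)*(A*B)*A'*(A*B)⁻¹*(A*B)⁻¹*(A*B)⁻¹
      = (A*B)⁻¹*(A*B)⁻¹*(A*B)⁻¹*A'*((A*B)*(A*B)*(A*B)) := hA1.symm.trans hA2
  have e9' : (A*B)*(A*B)*(A*B)*((A*B)*(A*B)*(A*B))*A'⁻¹
      = A'⁻¹*((A*B)*(A*B)*(A*B))*((A*B)*(A*B)*(A*B)) := by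
    have t := congrArg (fun x : G => (A*B)*(A*B)*(A*B) * x⁻¹ * ((A*B)*(A*B)*(A*B))) e9
    calc (A*B)*(A*B)*(A*B)*((A*B)*(A*B)*(A*B))*A'⁻¹
        = (A*B)*(A*B)*(A*B) * ((A*B)*(A*B)*(A*B)*A'*(A*B)⁻¹*(A*B)⁻¹*(A*B)⁻¹)⁻¹
            * ((A*B)*(A*B)*(A*B)) := by group
      _ = (A*B)*(A*B)*(A*B) * ((A*B)⁻¹*(A*B)⁻¹*(A*B)⁻¹*A'*((A*B)*(A*B)*(A*B)))⁻¹
            * ((A*B)*(A*B)*(A*B)) := t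
      _ = A'⁻¹*((A*B)*(A*B)*(A*B))*((A*B)*(A*B)*(A*B)) := by group
  have e10 : (A*B)*(A*B)*(A*B)*A⁻¹*(A*B)⁻¹*(A*B)⁻¹
      = (A'⁻¹*(A*B)⁻¹*(A*B)⁻¹)*(A'⁻¹*(A*B))*(A'⁻¹*(A*B)⁻¹*(A*B)⁻¹)⁻¹ := by
    calc (A*B)*(A*B)*(A*B)*A⁻¹*(A*B)⁻¹*(A*B)⁻¹ = B' := hB'.symm
      _ = C*C'*C⁻¹ := h8
      _ = (A'⁻¹*(A*B)⁻¹*(A*B)⁻¹)*(A'⁻¹*(A*B))*(A'⁻¹*(A*B)⁻¹*(A*B)⁻¹)⁻¹ := by rw [hC, hC'2]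
  have u1 : A'⁻¹*(A*B)
      = (A'⁻¹*(A*B)⁻¹*(A*B)⁻¹)*(A'⁻¹*(A*B))*(A'⁻¹*(A*B)⁻¹*(A*B)⁻¹)⁻¹ := by
    calc A'⁻¹*(A*B)
        = (A'⁻¹*((A*B)*(A*B)*(A*B))*((A*B)*(A*B)*(A*B)))
            * ((A*B)⁻¹*(A*B)⁻¹*(A*B)⁻¹*(A*B)⁻¹*(A*B)⁻¹) := by group
      _ = ((A*B)*(A*B)*(A*B)*((A*B)*(A*B)*(A*B))*A'⁻¹)
            * ((A*B)⁻¹*(A*B)⁻¹*(A*B)⁻¹*(A*B)⁻¹*(A*B)⁻¹) := by rw [← e9']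
      _ = (A*B)*(A*B)*(A*B)*((A*B)*(A*B)*(A*B)*A'*(A*B)⁻¹*(A*B)⁻¹*(A*B)⁻¹)⁻¹
            *(A*B)⁻¹*(A*B)⁻¹ := by group
      _ = (A*B)*(A*B)*(A*B)*A⁻¹*(A*B)⁻¹*(A*B)⁻¹ := by rw [← hA1]
      _ = (A'⁻¹*(A*B)⁻¹*(A*B)⁻¹)*(A'⁻¹*(A*B))*(A'⁻¹*(A*B)⁻¹*(A*B)⁻¹)⁻¹ := e10
  have hC3 : A'*((A*B)*(A*B)*(A*B)) = (A*B)*(A*B)*(A*B)*A' := by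
    calc A'*((A*B)*(A*B)*(A*B))
        = A'*((A'⁻¹*(A*B)⁻¹*(A*B)⁻¹)⁻¹*(A'⁻¹*(A*B))) := by group
      _ = A'*((A'⁻¹*(A*B)⁻¹*(A*B)⁻¹)⁻¹
            *((A'⁻¹*(A*B)⁻¹*(A*B)⁻¹)*(A'⁻¹*(A*B))*(A'⁻¹*(A*B)⁻¹*(A*B)⁻¹)⁻¹)) := by
          conv_lhs => rw [u1]
      _ = (A*B)*(A*B)*(A*B)*A' := by group
  have hC3' : A'⁻¹*((A*B)*(A*B)*(A*B)) = (A*B)*(A*B)*(A*B)*A'⁻¹ := by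
    calc A'⁻¹*((A*B)*(A*B)*(A*B))
        = A'⁻¹*((A*B)*(A*B)*(A*B)*A')*A'⁻¹ := by group
      _ = A'⁻¹*(A'*((A*B)*(A*B)*(A*B)))*A'⁻¹ := by rw [← hC3]
      _ = (A*B)*(A*B)*(A*B)*A'⁻¹ := by group
  have e11 : (A'⁻¹*(A*B)⁻¹*(A*B)⁻¹)*(A'⁻¹*(A*B))*(A'⁻¹*(A*B)⁻¹*(A*B)⁻¹)
      = (A'⁻¹*(A*B))*(A'⁻¹*(A*B)⁻¹*(A*B)⁻¹)*(A'⁻¹*(A*B)) := by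
    rw [← hC, ← hC'2]; exact h6
  have hp3one : (A*B)*(A*B)*(A*B) = 1 := by
    calc (A*B)*(A*B)*(A*B)
        = (A*B)*(A*B)*A'*(A*B)⁻¹*(A'*(A'⁻¹*((A*B)*(A*B)*(A*B)))
            *((A*B)⁻¹*(A*B)⁻¹*A'⁻¹*(A*B))) := by group
      _ = (A*B)*(A*B)*A'*(A*B)⁻¹*(A'*((A*B)*(A*B)*(A*B)*A'⁻¹)
            *((A*B)⁻¹*(A*B)⁻¹*A'⁻¹*(A*B))) := by rw [hC3']
      _ = ((A'⁻¹*(A*B)⁻¹*(A*B)⁻¹)*(A'⁻¹*(A*B))*(A'⁻¹*(A*B)⁻¹*(A*B)⁻¹))⁻¹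
            * ((A'⁻¹*(A*B))*(A'⁻¹*(A*B)⁻¹*(A*B)⁻¹)*(A'⁻¹*(A*B))) := by group
      _ = ((A'⁻¹*(A*B)⁻¹*(A*B)⁻¹)*(A'⁻¹*(A*B))*(A'⁻¹*(A*B)⁻¹*(A*B)⁻¹))⁻¹
            * ((A'⁻¹*(A*B)⁻¹*(A*B)⁻¹)*(A'⁻¹*(A*B))*(A'⁻¹*(A*B)⁻¹*(A*B)⁻¹)) := by rw [← e11]
      _ = 1 := by group
  -- conclusions
  have cA : A = A' := by
    calc A = (A*B)*(A*B)*(A*B)*A'*(A*B)⁻¹*(A*B)⁻¹*(A*B)⁻¹ := hA1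
      _ = ((A*B)*(A*B)*(A*B))*A'*((A*B)*(A*B)*(A*B))⁻¹ := by group
      _ = (1:G)*A'*(1:G)⁻¹ := by rw [hp3one]
      _ = A' := by group
  have cBC' : B = C' := by
    calc B = (A*B)*(A*B)*(A*B)*A'⁻¹*(A*B)⁻¹*(A*B)⁻¹ := hB
      _ = ((A*B)*(A*B)*(A*B))*(A'⁻¹*(A*B))*((A*B)*(A*B)*(A*B))⁻¹ := by group
      _ = (1:G)*(A'⁻¹*(A*B))*(1:G)⁻¹ := by rw [hp3one]
      _ = A'⁻¹*(A*B) := by group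
      _ = C' := hC'2.symm
  have cBC : B = C := by
    calc B = (A*B)*(A*B)*(A*B)*A'⁻¹*(A*B)⁻¹*(A*B)⁻¹ := hB
      _ = ((A*B)*(A*B)*(A*B))*(A'⁻¹*(A*B)⁻¹*(A*B)⁻¹) := by group
      _ = (1:G)*(A'⁻¹*(A*B)⁻¹*(A*B)⁻¹) := by rw [hp3one]
      _ = A'⁻¹*(A*B)⁻¹*(A*B)⁻¹ := by group
      _ = C := hC.symm
  have cBB' : B = B' := by
    have hB'2 : B' = (A*B)*(A*B)*(A*B)*A'⁻¹*(A*B)⁻¹*(A*B)⁻¹ := by rw [hB', cA]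
    exact hB.trans hB'2.symm
  have star' : A*(A*B)*A = (A*B)*(A*B) := by rw [← cA] at star; exact star
  have braid : A*B*A = B*A*B := by
    calc A*B*A = A⁻¹*(A*(A*B)*A) := by group
      _ = A⁻¹*((A*B)*(A*B)) := by rw [star']
      _ = B*A*B := by group
  refine ⟨cA, cBB', cBC, cBC', braid, ?_⟩
  rw [hpow]; exact hp3one

-- Bbar3 facts
lemma hbr : σ1*σ2*σ1 = σ2*σ1*σ2 := by
  have h := rel_one bbar3Rels (Set.mem_insert _ _)
  simp only [map_mul, map_inv] at h
  exact mul_inv_eq_one.mp h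

lemma hord : (σ1*σ2)^3 = 1 := by
  have h := rel_one bbar3Rels (Set.mem_insert_of_mem _ rfl)
  simp only [map_mul, map_pow] at h
  exact h

lemma hord' : σ1*σ2*(σ1*σ2)*(σ1*σ2) = 1 := by
  rw [show σ1*σ2*(σ1*σ2)*(σ1*σ2) = (σ1*σ2)^3 by simp [pow_succ]]; exact hord

lemma hts : σ2*σ1*σ2*σ1*σ2*σ1 = 1 := by
  calc σ2*σ1*σ2*σ1*σ2*σ1 = σ2*(σ1*σ2*(σ1*σ2)*(σ1*σ2))*σ2⁻¹ := by group
    _ = σ2*(1:Bbar3)*σ2⁻¹ := by rw [hord']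
    _ = 1 := by group

lemma hx242 : (σ2*σ1*σ2)⁻¹*σ1*(σ2*σ1*σ2) = σ2 := by
  calc (σ2*σ1*σ2)⁻¹*σ1*(σ2*σ1*σ2) = (σ1*σ2*σ1)⁻¹*σ1*(σ1*σ2*σ1) := by rw [← hbr]
    _ = σ1⁻¹*σ2⁻¹*(σ1*σ2*σ1) := by group
    _ = σ1⁻¹*σ2⁻¹*(σ2*σ1*σ2) := by rw [hbr]
    _ = σ2 := by group

def fmap : Fin 6 → Bbar3 := fun i => if i.val ≤ 1 then σ1 else σ2

lemma hf : ∀ r ∈ Stmt.rels, FreeGroup.lift fmap r = 1 := by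
  have f0 : fmap 0 = σ1 := rfl
  have f1 : fmap 1 = σ1 := rfl
  have f2 : fmap 2 = σ2 := rfl
  have f3 : fmap 3 = σ2 := rfl
  have f4 : fmap 4 = σ2 := rfl
  have f5 : fmap 5 = σ2 := rfl
  intro r hr
  simp only [Stmt.rels, Set.mem_insert_iff, Set.mem_singleton_iff] at hr
  rcases hr with rfl|rfl|rfl|rfl|rfl|rfl|rfl|rfl|rfl|rfl|rfl <;>
    simp only [Stmt.a, Stmt.a', Stmt.b, Stmt.b', Stmt.c, Stmt.c',
      map_mul, map_inv, map_pow, FreeGroup.lift_apply_of, f0, f1, f2, f3, f4, f5]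
  · -- (σ1σ2)^3 (σ2σ1σ2σ1σ2σ1)⁻¹
    rw [hord, hts]; group
  · rw [hord, hts]; group
  · group
  · rw [hx242]; group
  · rw [hx242]; group
  · group
  · group
  · group
  · group
  · calc σ1*σ2*σ2*σ1*σ2*σ2 = σ1*σ2*(σ2*σ1*σ2)*σ2 := by group
      _ = σ1*σ2*(σ1*σ2*σ1)*σ2 := by rw [← hbr]
      _ = σ1*σ2*(σ1*σ2)*(σ1*σ2) := by group
      _ = 1 := hord'
  · calc σ2*(σ1*σ2*σ1*(σ1*σ2)⁻¹)⁻¹ = σ2*((σ1*σ2*σ1)*(σ1*σ2)⁻¹)⁻¹ := by group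
      _ = σ2*((σ2*σ1*σ2)*(σ1*σ2)⁻¹)⁻¹ := by rw [hbr]
      _ = 1 := by group

/-- Adding the relation `γ' = (α'β')α'(α'β')⁻¹` to the relations R₄, the resulting group maps
isomorphically onto `B̄₃` by `α, α' ↦ σ₁` and `β, β', γ, γ' ↦ σ₂`. -/
theorem stmt7 :
    ∃ φ : PresentedGroup Stmt.rels →* Bbar3,
      (φ (PresentedGroup.of 0) = σ1 ∧ φ (PresentedGroup.of 1) = σ1 ∧
       φ (PresentedGroup.of 2) = σ2 ∧ φ (PresentedGroup.of 3) = σ2 ∧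
       φ (PresentedGroup.of 4) = σ2 ∧ φ (PresentedGroup.of 5) = σ2) ∧
      Function.Bijective φ := by
  -- facts in the source group
  have R : ∀ r ∈ Stmt.rels, PresentedGroup.mk Stmt.rels r = 1 := fun r hr => rel_one _ hr
  have q1 := R _ (show _ ∈ Stmt.rels from Set.mem_insert _ _)
  have q2 := R _ (show _ ∈ Stmt.rels from
    Set.mem_insert_of_mem _ (Set.mem_insert _ _))
  have q3 := R _ (show _ ∈ Stmt.rels from
    Set.mem_insert_of_mem _ (Set.mem_insert_of_mem _ (Set.mem_insert _ _)))
  have q6 := R _ (show _ ∈ Stmt.rels from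
    Set.mem_insert_of_mem _ (Set.mem_insert_of_mem _ (Set.mem_insert_of_mem _
      (Set.mem_insert_of_mem _ (Set.mem_insert_of_mem _ (Set.mem_insert _ _))))))
  have q7 := R _ (show _ ∈ Stmt.rels from
    Set.mem_insert_of_mem _ (Set.mem_insert_of_mem _ (Set.mem_insert_of_mem _
      (Set.mem_insert_of_mem _ (Set.mem_insert_of_mem _ (Set.mem_insert_of_mem _
        (Set.mem_insert _ _)))))))
  have q8 := R _ (show _ ∈ Stmt.rels from
    Set.mem_insert_of_mem _ (Set.mem_insert_of_mem _ (Set.mem_insert_of_mem _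
      (Set.mem_insert_of_mem _ (Set.mem_insert_of_mem _ (Set.mem_insert_of_mem _
        (Set.mem_insert_of_mem _ (Set.mem_insert _ _))))))))
  have q10 := R _ (show _ ∈ Stmt.rels from
    Set.mem_insert_of_mem _ (Set.mem_insert_of_mem _ (Set.mem_insert_of_mem _
      (Set.mem_insert_of_mem _ (Set.mem_insert_of_mem _ (Set.mem_insert_of_mem _
        (Set.mem_insert_of_mem _ (Set.mem_insert_of_mem _ (Set.mem_insert_of_mem _
          (Set.mem_insert _ _))))))))))
  have q11 := R _ (show _ ∈ Stmt.rels from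
    Set.mem_insert_of_mem _ (Set.mem_insert_of_mem _ (Set.mem_insert_of_mem _
      (Set.mem_insert_of_mem _ (Set.mem_insert_of_mem _ (Set.mem_insert_of_mem _
        (Set.mem_insert_of_mem _ (Set.mem_insert_of_mem _ (Set.mem_insert_of_mem _
          (Set.mem_insert_of_mem _ rfl))))))))))
  simp only [Stmt.a, Stmt.a', Stmt.b, Stmt.b', Stmt.c, Stmt.c',
    map_mul, map_inv, map_pow] at q1 q2 q3 q6 q7 q8 q10 q11
  obtain ⟨cA, cBB', cBC, cBC', braid, hcube⟩ :=
    key _ _ _ _ _ _ q1 q2 q3 q6 q7 q8 q10 q11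
  -- ψ : Bbar3 →* G
  set G := PresentedGroup Stmt.rels
  let g : Fin 2 → G := fun i => if i.val = 0 then PresentedGroup.of 0 else PresentedGroup.of 2
  have hg : ∀ r ∈ bbar3Rels, FreeGroup.lift g r = 1 := by
    intro r hr
    rcases hr with rfl | hr
    · simp only [map_mul, map_inv, FreeGroup.lift_apply_of]
      show PresentedGroup.of 0 * PresentedGroup.of 2 * PresentedGroup.of 0 *
        (PresentedGroup.of 2 * PresentedGroup.of 0 * PresentedGroup.of 2)⁻¹ = 1
      exact mul_inv_eq_one.mpr braid
    · rcases hr with rfl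
      simp only [map_mul, map_pow, FreeGroup.lift_apply_of]
      show (PresentedGroup.of 0 * PresentedGroup.of 2)^3 = 1
      exact hcube
  let φ : PresentedGroup Stmt.rels →* Bbar3 := PresentedGroup.toGroup hf
  let ψ : Bbar3 →* G := PresentedGroup.toGroup hg
  have e0 : φ (PresentedGroup.of 0) = σ1 := PresentedGroup.toGroup.of hf
  have e1 : φ (PresentedGroup.of 1) = σ1 := PresentedGroup.toGroup.of hf
  have e2 : φ (PresentedGroup.of 2) = σ2 := PresentedGroup.toGroup.of hf
  have e3 : φ (PresentedGroup.of 3) = σ2 := PresentedGroup.toGroup.of hf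
  have e4 : φ (PresentedGroup.of 4) = σ2 := PresentedGroup.toGroup.of hf
  have e5 : φ (PresentedGroup.of 5) = σ2 := PresentedGroup.toGroup.of hf
  have y1 : ψ σ1 = PresentedGroup.of 0 := PresentedGroup.toGroup.of hg
  have y2 : ψ σ2 = PresentedGroup.of 2 := PresentedGroup.toGroup.of hg
  have hli : ∀ x : G, ψ (φ x) = x := by
    have : ψ.comp φ = MonoidHom.id G := by
      apply PresentedGroup.ext
      intro x
      fin_cases x
      · show ψ (φ (PresentedGroup.of 0)) = PresentedGroup.of 0
        rw [e0, y1]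
      · show ψ (φ (PresentedGroup.of 1)) = PresentedGroup.of 1
        rw [e1, y1]; exact cA
      · show ψ (φ (PresentedGroup.of 2)) = PresentedGroup.of 2
        rw [e2, y2]
      · show ψ (φ (PresentedGroup.of 3)) = PresentedGroup.of 3
        rw [e3, y2]; exact cBB'
      · show ψ (φ (PresentedGroup.of 4)) = PresentedGroup.of 4
        rw [e4, y2]; exact cBC
      · show ψ (φ (PresentedGroup.of 5)) = PresentedGroup.of 5
        rw [e5, y2]; exact cBC'
    intro x
    exact DFunLike.congr_fun this x
  have hri : ∀ y : Bbar3, φ (ψ y) = y := by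
    have : φ.comp ψ = MonoidHom.id Bbar3 := by
      apply PresentedGroup.ext
      intro x
      fin_cases x
      · show φ (ψ (PresentedGroup.of 0)) = PresentedGroup.of 0
        have : ψ (PresentedGroup.of 0) = PresentedGroup.of 0 := y1
        rw [this]; exact e0
      · show φ (ψ (PresentedGroup.of 1)) = PresentedGroup.of 1
        have : ψ (PresentedGroup.of 1) = PresentedGroup.of 2 := y2
        rw [this]; exact e2
    intro y
    exact DFunLike.congr_fun this y
  exact ⟨φ, ⟨e0, e1, e2, e3, e4, e5⟩,
    Function.LeftInverse.injective hli, Function.RightInverse.surjective hri⟩
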